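/- Let G₁ and G₂ be finite simple graphs such that for some k the multisets of k-level WL labels of their vertices are equal. Then for every rooted tree (T, r) of depth at most k, the total number of homomorphisms from T to G₁ equals the total number of homomorphisms from T to G₂. -/

import Mathlib

/-- The type of `k`-level Weisfeiler–Leman labels. -/
def WLLabel : ℕ → Type
  | 0 => Unit
  | k + 1 => Multiset (WLLabel k)

/-- The `k`-level Weisfeiler–Leman label of a vertex. -/
def wlLabel {V : Type} [Fintype V] (G : SimpleGraph V) [DecidableRel G.Adj] :
    (k : ℕ) → V → WLLabel k
  | 0, _ => ()
  | k + 1, v => (G.neighborFinset v).val.map (wlLabel G k)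

/-- The multiset of `k`-level WL labels of all vertices of `G`. -/
def wlMultiset {V : Type} [Fintype V] (G : SimpleGraph V) [DecidableRel G.Adj] (k : ℕ) :
    Multiset (WLLabel k) :=
  (Finset.univ : Finset V).val.map (wlLabel G k)

/-!
Orient `T` away from the root `r`. The vertices below a vertex `w` are `w` itself together with
the disjoint subtrees below the children of `w`, and the only edges leaving a child's subtree go to
`w`. Hence a homomorphism of the subtree below `w` sending `w` to `v` is the same as an independent
choice, for every child `u`, of a neighbour `x` of `v` and a homomorphism of the subtree below `u`
sending `u` to `x`. Unwinding this recursion `n` levels deep, the number of such homomorphisms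
depends on `v` only through its `n`-level WL label, and summing over `v` expresses the number of
homomorphisms `T →g G` through the multiset of `k`-level WL labels of `G`.
-/

theorem Nat.card_subtype_mem_eq_sum_card_fiber {α β : Type*} [Finite α] (φ : α → β)
    (s : Finset β) : Nat.card {a // φ a ∈ s} = ∑ b ∈ s, Nat.card {a // φ a = b} := by
  rw [← Nat.card_congr (Equiv.sigmaSubtypeFiberEquivSubtype φ fun _ => Iff.rfl), Nat.card_sigma]
  exact Finset.sum_coe_sort s fun b => Nat.card {a // φ a = b}

theorem Nat.card_eq_sum_card_fiber {α β : Type*} [Finite α] [Fintype β] (φ : α → β) :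
    Nat.card α = ∑ b, Nat.card {a // φ a = b} := by
  rw [← Nat.card_congr (Equiv.sigmaFiberEquiv φ), Nat.card_sigma]

theorem sum_neighborFinset_comp_wlLabel {V : Type} {M : Type*} [AddCommMonoid M] [Fintype V]
    (G : SimpleGraph V) [DecidableRel G.Adj] (n : ℕ) (v : V) (φ : WLLabel n → M) :
    ∑ x ∈ G.neighborFinset v, φ (wlLabel G n x) = ((wlLabel G (n + 1) v).map φ).sum := by
  rw [wlLabel, Multiset.map_map]
  rfl

theorem sum_comp_wlLabel {V : Type} {M : Type*} [AddCommMonoid M] [Fintype V]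
    (G : SimpleGraph V) [DecidableRel G.Adj] (n : ℕ) (φ : WLLabel n → M) :
    ∑ v, φ (wlLabel G n v) = ((wlMultiset G n).map φ).sum := by
  rw [wlMultiset, Multiset.map_map]
  rfl

namespace SimpleGraph

variable {W : Type} (T : SimpleGraph W) (r : W)

/-- `x` lies below `w`: `w` is on a geodesic from `r` to `x`. -/
def descendants (w : W) : Set W := {x | T.dist r x = T.dist r w + T.dist w x}

noncomputable def children [Fintype W] (w : W) : Finset W := by
  classical exact {u | T.Adj w u ∧ T.dist r u = T.dist r w + 1}

variable {T r}

lemma mem_descendants {w x : W} :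
    x ∈ T.descendants r w ↔ T.dist r x = T.dist r w + T.dist w x :=
  Iff.rfl

lemma mem_descendants_self (w : W) : w ∈ T.descendants r w := by
  simp [descendants]

lemma mem_descendants_root (x : W) : x ∈ T.descendants r r := by
  simp [descendants]

lemma Connected.mem_descendants_trans (hT : T.Connected) {u w x : W}
    (hw : w ∈ T.descendants r u) (hx : x ∈ T.descendants r w) : x ∈ T.descendants r u := by
  have := hT.dist_triangle (u := u) (v := w) (w := x)
  have := hT.dist_triangle (u := r) (v := u) (w := x)
  rw [mem_descendants] at *
  omega

variable [Fintype W]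

lemma mem_children {w u : W} :
    u ∈ T.children r w ↔ T.Adj w u ∧ T.dist r u = T.dist r w + 1 := by
  classical simp [children]

lemma mem_descendants_of_mem_children {w u : W} (hu : u ∈ T.children r w) :
    u ∈ T.descendants r w := by
  obtain ⟨hadj, hd⟩ := mem_children.mp hu
  simp [descendants, hd, dist_eq_one_iff_adj.mpr hadj]

lemma IsTree.mem_children_or_mem_children (hT : T.IsTree) {a b : W} (hab : T.Adj a b) :
    b ∈ T.children r a ∨ a ∈ T.children r b := by
  simp only [mem_children]
  rcases hT.dist_eq_dist_add_one_of_adj r hab with h | h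
  · exact Or.inr ⟨hab.symm, h⟩
  · exact Or.inl ⟨hab, h⟩

lemma ne_of_mem_descendants_of_mem_children {w u x : W} (hu : u ∈ T.children r w)
    (hx : x ∈ T.descendants r u) : x ≠ w := by
  rintro rfl
  have := (mem_children.mp hu).2
  rw [mem_descendants] at hx
  omega

lemma Connected.exists_mem_children_mem_descendants (hT : T.Connected) {w x : W}
    (hx : x ∈ T.descendants r w) (hxw : x ≠ w) :
    ∃ u ∈ T.children r w, x ∈ T.descendants r u := by
  obtain ⟨p, hp⟩ := hT.exists_walk_length_eq_dist w x
  cases p with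
  | nil => exact absurd rfl hxw
  | @cons _ u _ hadj q =>
    have h1 : T.dist u x ≤ q.length := dist_le q
    have h2 := hT.dist_triangle (u := r) (v := w) (w := u)
    have h3 := hT.dist_triangle (u := r) (v := u) (w := x)
    rw [dist_eq_one_iff_adj.mpr hadj] at h2
    simp only [Walk.length_cons] at hp
    rw [mem_descendants] at hx
    exact ⟨u, mem_children.mpr ⟨hadj, by omega⟩, mem_descendants.mpr (by omega)⟩

lemma IsTree.eq_of_mem_descendants_of_mem_children (hT : T.IsTree) {w u₁ u₂ x : W}
    (hu₁ : u₁ ∈ T.children r w) (hu₂ : u₂ ∈ T.children r w)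
    (hx₁ : x ∈ T.descendants r u₁) (hx₂ : x ∈ T.descendants r u₂) : u₁ = u₂ := by
  have geodesic : ∀ u ∈ T.children r w, x ∈ T.descendants r u →
      ∃ p : T.Walk w x, p.IsPath ∧ p.snd = u := by
    intro u hu hx
    obtain ⟨hadj, hd⟩ := mem_children.mp hu
    have hwx := hT.connected.mem_descendants_trans (mem_descendants_of_mem_children hu) hx
    obtain ⟨q, hq⟩ := hT.connected.exists_walk_length_eq_dist u x
    rw [mem_descendants] at hx hwx
    exact ⟨.cons hadj q, Walk.isPath_of_length_eq_dist _ (by simp only [Walk.length_cons]; omega),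
      Walk.snd_cons q hadj⟩
  obtain ⟨p₁, hp₁, rfl⟩ := geodesic u₁ hu₁ hx₁
  obtain ⟨p₂, hp₂, rfl⟩ := geodesic u₂ hu₂ hx₂
  rw [(hT.existsUnique_path w x).unique hp₁ hp₂]

lemma Connected.descendants_subset_of_mem_children (hT : T.Connected) {w u : W}
    (hu : u ∈ T.children r w) : T.descendants r u ⊆ T.descendants r w :=
  fun _ => hT.mem_descendants_trans (mem_descendants_of_mem_children hu)

variable {V : Type} {G : SimpleGraph V}

open Classical in
noncomputable def Connected.glueChildren (hT : T.Connected) (w : W) (v : V)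
    (F : (u : T.children r w) → T.descendants r u → V) : T.descendants r w → V := fun x =>
  if h : x.1 = w then v
  else F ⟨_, (hT.exists_mem_children_mem_descendants x.2 h).choose_spec.1⟩
    ⟨x, (hT.exists_mem_children_mem_descendants x.2 h).choose_spec.2⟩

lemma Connected.glueChildren_self (hT : T.Connected) {w : W} {v : V}
    (F : (u : T.children r w) → T.descendants r u → V) :
    hT.glueChildren w v F ⟨w, mem_descendants_self w⟩ = v := by
  rw [glueChildren, dif_pos rfl]

lemma IsTree.glueChildren_of_mem (hT : T.IsTree) {w u : W} {v : V}
    (F : (u : T.children r w) → T.descendants r u → V) (hu : u ∈ T.children r w)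
    {x : W} (hx : x ∈ T.descendants r u) :
    hT.connected.glueChildren w v F ⟨x, hT.connected.descendants_subset_of_mem_children hu hx⟩ =
      F ⟨u, hu⟩ ⟨x, hx⟩ := by
  have hxw := ne_of_mem_descendants_of_mem_children hu hx
  obtain ⟨hu', hx'⟩ := (hT.connected.exists_mem_children_mem_descendants
    (hT.connected.descendants_subset_of_mem_children hu hx) hxw).choose_spec
  have eval_congr : ∀ {u₁ u₂ : W} (e : u₁ = u₂) h₁ h₂ hx₁ hx₂,
      F ⟨u₁, h₁⟩ ⟨x, hx₁⟩ = F ⟨u₂, h₂⟩ ⟨x, hx₂⟩ := by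
    rintro _ _ rfl _ _ _ _; rfl
  rw [Connected.glueChildren, dif_neg hxw]
  exact eval_congr (hT.eq_of_mem_descendants_of_mem_children hu' hu hx' hx) _ _ _ _

lemma IsTree.glueChildren_adj (hT : T.IsTree) {w : W} {v : V}
    (F : (u : T.children r w) → T.descendants r u → V)
    (hroot : ∀ u, G.Adj v (F u ⟨u, mem_descendants_self _⟩))
    (hadj : ∀ u a b, T.Adj a.1 b.1 → G.Adj (F u a) (F u b))
    {x y : T.descendants r w} (hxy : T.Adj x y) :
    G.Adj (hT.connected.glueChildren w v F x) (hT.connected.glueChildren w v F y) := by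
  have of_mem_children : ∀ a b : T.descendants r w, b.1 ∈ T.children r a →
      G.Adj (hT.connected.glueChildren w v F a) (hT.connected.glueChildren w v F b) := by
    rintro ⟨a, ha⟩ ⟨b, hb⟩ hba
    by_cases haw : a = w
    · subst haw
      rw [hT.connected.glueChildren_self, hT.glueChildren_of_mem F hba (mem_descendants_self b)]
      exact hroot ⟨b, hba⟩
    · obtain ⟨u, hu, hau⟩ := hT.connected.exists_mem_children_mem_descendants ha haw
      have hbu := hT.connected.mem_descendants_trans hau (mem_descendants_of_mem_children hba)
      rw [hT.glueChildren_of_mem F hu hau, hT.glueChildren_of_mem F hu hbu]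
      exact hadj _ ⟨a, hau⟩ ⟨b, hbu⟩ (mem_children.mp hba).1
  rcases hT.mem_children_or_mem_children hxy with h | h
  · exact of_mem_children x y h
  · exact (of_mem_children y x h).symm

noncomputable def IsTree.glueChildrenHom (hT : T.IsTree) {w : W} (v : V)
    (F : (u : T.children r w) →
      {g : T.induce (T.descendants r u) →g G // G.Adj v (g ⟨u, mem_descendants_self _⟩)}) :
    T.induce (T.descendants r w) →g G where
  toFun := hT.connected.glueChildren w v fun u => F u
  map_rel' := hT.glueChildren_adj _ (fun u => (F u).2) (fun u _ _ h => (F u).1.map_adj h)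

lemma IsTree.glueChildrenHom_apply (hT : T.IsTree) {w : W} {v : V}
    (F : (u : T.children r w) →
      {g : T.induce (T.descendants r u) →g G // G.Adj v (g ⟨u, mem_descendants_self _⟩)})
    (x : T.descendants r w) :
    hT.glueChildrenHom v F x = hT.connected.glueChildren w v (fun u => F u) x :=
  rfl

noncomputable def IsTree.subtreeHomEquiv (hT : T.IsTree) (w : W) (v : V) :
    {g : T.induce (T.descendants r w) →g G // g ⟨w, mem_descendants_self w⟩ = v} ≃
      ((u : T.children r w) → {g : T.induce (T.descendants r u) →g G //
        G.Adj v (g ⟨u, mem_descendants_self _⟩)}) where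
  toFun g u :=
    ⟨g.1.comp (T.induceHomOfLE (hT.connected.descendants_subset_of_mem_children u.2)).toHom, by
      have hwu : (T.induce (T.descendants r w)).Adj ⟨w, mem_descendants_self w⟩
          ⟨u, hT.connected.descendants_subset_of_mem_children u.2 (mem_descendants_self _)⟩ :=
        (mem_children.mp u.2).1
      have h := g.1.map_adj hwu
      rw [g.2] at h
      exact h⟩
  invFun F := ⟨hT.glueChildrenHom v F,
    (hT.glueChildrenHom_apply F _).trans (hT.connected.glueChildren_self _)⟩
  left_inv g := by
    ext ⟨x, hx⟩
    rw [glueChildrenHom_apply]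
    by_cases hxw : x = w
    · subst hxw
      exact (hT.connected.glueChildren_self _).trans g.2.symm
    · obtain ⟨u, hu, hxu⟩ := hT.connected.exists_mem_children_mem_descendants hx hxw
      exact hT.glueChildren_of_mem _ hu hxu
  right_inv F := by
    funext u
    ext ⟨x, hx⟩
    exact (hT.glueChildrenHom_apply F _).trans (hT.glueChildren_of_mem _ u.2 hx)

lemma IsTree.card_subtreeHom_eq_prod_sum [Fintype V] [DecidableRel G.Adj] (hT : T.IsTree)
    (w : W) (v : V) :
    Nat.card {g : T.induce (T.descendants r w) →g G // g ⟨w, mem_descendants_self w⟩ = v} =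
      ∏ u ∈ T.children r w, ∑ x ∈ G.neighborFinset v,
        Nat.card {g : T.induce (T.descendants r u) →g G //
          g ⟨u, mem_descendants_self u⟩ = x} := by
  rw [Nat.card_congr (hT.subtreeHomEquiv w v), Nat.card_pi,
    ← Finset.prod_coe_sort (T.children r w)]
  refine Fintype.prod_congr _ _ fun u => ?_
  simp_rw [← mem_neighborFinset]
  exact Nat.card_subtype_mem_eq_sum_card_fiber _ _

/-- If the subtree below `w` has height at most `n`, then `T.treeHomCount r n w L` is the number
of homomorphisms from it to a graph that send `w` to a given vertex of `n`-level WL label `L`. -/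
noncomputable def treeHomCount (T : SimpleGraph W) (r : W) : (n : ℕ) → W → WLLabel n → ℕ
  | 0, _, _ => 1
  | n + 1, w, L => ∏ u ∈ T.children r w, (L.map (T.treeHomCount r n u)).sum

lemma IsTree.card_subtreeHom_eq_treeHomCount [Fintype V] [DecidableRel G.Adj] (hT : T.IsTree)
    {k : ℕ} (hdepth : ∀ x, T.dist r x ≤ k) (n : ℕ) (w : W) (v : V)
    (hw : k ≤ T.dist r w + n) :
    Nat.card {g : T.induce (T.descendants r w) →g G // g ⟨w, mem_descendants_self w⟩ = v} =
      T.treeHomCount r n w (wlLabel G n v) := by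
  -- `hw` bounds the height of the subtree below `w` by `n`.
  induction n generalizing w v with
  | zero =>
    have leaf : T.children r w = ∅ := Finset.eq_empty_of_forall_notMem fun u hu => by
      have := (mem_children.mp hu).2
      have := hdepth u
      omega
    rw [hT.card_subtreeHom_eq_prod_sum, leaf, Finset.prod_empty, treeHomCount]
  | succ n ih =>
    rw [hT.card_subtreeHom_eq_prod_sum, treeHomCount]
    refine Finset.prod_congr rfl fun u hu => ?_
    rw [← sum_neighborFinset_comp_wlLabel]
    have := (mem_children.mp hu).2
    exact Finset.sum_congr rfl fun x _ => ih u x (by omega)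

def descendantsRootIso : T.induce (T.descendants r r) ≃g T where
  toEquiv := Equiv.subtypeUnivEquiv mem_descendants_root
  map_rel_iff' := Iff.rfl

lemma IsTree.card_hom_eq_sum_wlMultiset [Fintype V] [DecidableRel G.Adj] (hT : T.IsTree)
    {k : ℕ} (hdepth : ∀ x, T.dist r x ≤ k) :
    Nat.card (T →g G) = ((wlMultiset G k).map (T.treeHomCount r k r)).sum := by
  rw [Nat.card_eq_sum_card_fiber fun f : T →g G => f r, ← sum_comp_wlLabel]
  refine Finset.sum_congr rfl fun v _ => ?_
  rw [← hT.card_subtreeHom_eq_treeHomCount hdepth k r v (Nat.le_add_left k _)]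
  exact Nat.card_congr <| (descendantsRootIso.homCongr .refl).symm.subtypeEquiv fun _ => Iff.rfl

end SimpleGraph

/-- If two graphs have equal multisets of `k`-level WL labels, then every rooted tree of
depth at most `k` has the same total number of homomorphisms to both graphs. -/
theorem wlMultiset_eq_hom_count_eq
    {V₁ V₂ : Type} [Fintype V₁] [Fintype V₂]
    (G₁ : SimpleGraph V₁) (G₂ : SimpleGraph V₂)
    [DecidableRel G₁.Adj] [DecidableRel G₂.Adj]
    (k : ℕ) (h : wlMultiset G₁ k = wlMultiset G₂ k)
    {W : Type} [Fintype W] (T : SimpleGraph W) (hT : T.IsTree) (r : W)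
    (hdepth : ∀ w : W, T.dist r w ≤ k) :
    Nat.card (T →g G₁) = Nat.card (T →g G₂) := by
  rw [hT.card_hom_eq_sum_wlMultiset hdepth, hT.card_hom_eq_sum_wlMultiset hdepth, h]
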